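/- arXiv:2203.00546 — 5 statements merged into one kernel-verified Lean document; each statement's English description precedes it below -/
import Mathlib

section
/- Proposition 1 (Upper bound of quantum risk, trace form). Let U and V be N×N complex unitary matrices with N/2 ≤ t ≤ N, and let x_1, …, x_t ∈ ℂ^N be linearly independent vectors that are pairwise nonorthogonal, i.e. ⟨x_j, x_k⟩ ≠ 0 for all 1 ≤ j, k ≤ t. Suppose that for each j there is a complex scalar c_j with |c_j| = 1 such that V x_j = c_j · (U x_j) (perfect training on the dataset {(x_j, U x_j)}). Then |tr(U† V)| ≥ 2t − N. -/
/-!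
`W = Uᴴ * V` is unitary and `W x_j = c_j x_j`. A unitary preserves inner products, so
`⟪x_j, x_k⟫ = conj c_j * c_k * ⟪x_j, x_k⟫`, and nonorthogonality forces all the `c_j` to be one
phase `c`. Then `conj c • W` is a contraction fixing the `t`-dimensional span of the `x_j`.
Computing its trace in an orthonormal basis whose first `t` vectors lie in that span, those
`t` diagonal entries are `1` and the other `N - t` have real part at least `-1`.
-/

open Matrix Module Submodule
open scoped InnerProductSpace ComplexConjugate

section

variable {𝕜 E : Type*} [RCLike 𝕜] [NormedAddCommGroup E] [InnerProductSpace 𝕜 E]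

namespace ContinuousLinearMap

variable [CompleteSpace E] {T : E →L[𝕜] E} {x y : E} {a b : 𝕜}

theorem conj_mul_eq_one_of_inner_ne_zero (hT : T ∈ unitary (E →L[𝕜] E))
    (hx : T x = a • x) (hy : T y = b • y) (hxy : ⟪x, y⟫_𝕜 ≠ 0) : conj a * b = 1 := by
  have h := T.inner_map_map_of_mem_unitary hT x y
  rw [hx, hy, inner_smul_left, inner_smul_right, ← mul_assoc] at h
  exact mul_right_cancel₀ hxy (h.trans (one_mul _).symm)

theorem eigenvalue_eq_of_inner_ne_zero (hT : T ∈ unitary (E →L[𝕜] E))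
    (hx : T x = a • x) (hy : T y = b • y) (hxy : ⟪x, y⟫_𝕜 ≠ 0) : b = a := by
  have hx₀ : x ≠ 0 := by
    rintro rfl
    exact hxy (inner_zero_left y)
  have haa := conj_mul_eq_one_of_inner_ne_zero hT hx hx (inner_self_ne_zero.2 hx₀)
  have hab := conj_mul_eq_one_of_inner_ne_zero hT hx hy hxy
  calc b = (conj a * a) * b := by rw [haa, one_mul]
    _ = a * (conj a * b) := by ring
    _ = a := by rw [hab, mul_one]

end ContinuousLinearMap

theorem Submodule.exists_orthonormalBasis_fin_mem [FiniteDimensional 𝕜 E] (S : Submodule 𝕜 E) :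
    ∃ b : OrthonormalBasis (Fin (finrank 𝕜 E)) 𝕜 E, ∀ i : Fin (finrank 𝕜 E),
      (i : ℕ) < finrank 𝕜 S → b i ∈ S := by
  let e := stdOrthonormalBasis 𝕜 S
  let v : Fin (finrank 𝕜 E) → E := fun i => if h : (i : ℕ) < finrank 𝕜 S then e ⟨i, h⟩ else 0
  let s : Set (Fin (finrank 𝕜 E)) := {i | (i : ℕ) < finrank 𝕜 S}
  have hv : Orthonormal 𝕜 (s.domRestrict v) := by
    have : s.domRestrict v =
        (S.subtypeₗᵢ ∘ e) ∘ fun i : s => (⟨i.1, i.2⟩ : Fin (finrank 𝕜 S)) := by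
      funext i
      exact dif_pos i.2
    rw [this]
    exact (e.orthonormal.comp_linearIsometry _).comp _ fun i j h => by
      simpa [Fin.ext_iff, Subtype.ext_iff] using h
  obtain ⟨b, hb⟩ := hv.exists_orthonormalBasis_extension_of_card_eq (by simp)
  refine ⟨b, fun i hi => ?_⟩
  rw [hb i hi]
  simp [v, hi]

namespace LinearMap

variable {T : E →ₗ[𝕜] E}

theorem two_mul_card_sub_card_le_re_trace {ι : Type*} [Fintype ι] (hT : ∀ v, ‖T v‖ ≤ ‖v‖)
    (b : OrthonormalBasis ι 𝕜 E) (A : Finset ι) (hA : ∀ i ∈ A, T (b i) = b i) :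
    2 * A.card - Fintype.card ι ≤ RCLike.re (trace 𝕜 E T) := by
  classical
  have hterm : ∀ i, (if i ∈ A then 1 else -1 : ℝ) ≤ RCLike.re ⟪b i, T (b i)⟫_𝕜 := by
    intro i
    split_ifs with hi
    · rw [hA i hi, inner_self_eq_norm_sq, b.orthonormal.1 i, one_pow]
    · have hnorm : ‖⟪b i, T (b i)⟫_𝕜‖ ≤ 1 :=
        calc ‖⟪b i, T (b i)⟫_𝕜‖ ≤ ‖b i‖ * ‖T (b i)‖ := norm_inner_le_norm _ _
          _ ≤ 1 := by simpa [b.orthonormal.1 i] using hT (b i)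
      exact neg_le_of_abs_le ((RCLike.abs_re_le_norm _).trans hnorm)
  calc (2 * A.card - Fintype.card ι : ℝ) = ∑ i, if i ∈ A then 1 else -1 := by
        simp [Finset.sum_ite, Finset.filter_not, Finset.card_univ_sdiff,
          Nat.cast_sub A.card_le_univ]
        ring
    _ ≤ ∑ i, RCLike.re ⟪b i, T (b i)⟫_𝕜 := Finset.sum_le_sum fun i _ => hterm i
    _ = RCLike.re (trace 𝕜 E T) := by rw [trace_eq_sum_inner T b, map_sum]

variable [FiniteDimensional 𝕜 E]

theorem two_mul_finrank_sub_finrank_le_re_trace (hT : ∀ v, ‖T v‖ ≤ ‖v‖)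
    (S : Submodule 𝕜 E) (hS : ∀ v ∈ S, T v = v) :
    2 * finrank 𝕜 S - finrank 𝕜 E ≤ RCLike.re (trace 𝕜 E T) := by
  classical
  obtain ⟨b, hb⟩ := S.exists_orthonormalBasis_fin_mem
  have := two_mul_card_sub_card_le_re_trace hT b {i | (i : ℕ) < finrank 𝕜 S}
    fun i hi => hS _ (hb i (by simpa using hi))
  rwa [Fin.card_filter_val_lt, min_eq_right S.finrank_le, Fintype.card_fin] at this

theorem two_mul_finrank_sub_finrank_le_norm_trace (hT : ∀ v, ‖T v‖ ≤ ‖v‖)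
    {a : 𝕜} (ha : ‖a‖ = 1) (S : Submodule 𝕜 E) (hS : ∀ v ∈ S, T v = a • v) :
    2 * finrank 𝕜 S - finrank 𝕜 E ≤ ‖trace 𝕜 E T‖ := by
  have hrot := two_mul_finrank_sub_finrank_le_re_trace (T := conj a • T)
    (fun v => by simpa [norm_smul, ha] using hT v) S
    (fun v hv => by rw [smul_apply, hS v hv, smul_smul, RCLike.conj_mul, ha]; simp)
  calc _ ≤ RCLike.re (trace 𝕜 E (conj a • T)) := hrot
    _ ≤ ‖trace 𝕜 E (conj a • T)‖ := RCLike.re_le_norm _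
    _ = ‖trace 𝕜 E T‖ := by simp [ha]

end LinearMap

end

theorem Matrix.trace_toEuclideanLin {𝕜 n : Type*} [RCLike 𝕜] [Fintype n] [DecidableEq n]
    (A : Matrix n n 𝕜) : LinearMap.trace 𝕜 _ (toEuclideanLin A) = A.trace := by
  rw [toEuclideanLin_eq_toLin_orthonormal, Matrix.trace_toLin_eq]

theorem trace_lower_bound_of_perfect_training_general
    {N t : ℕ}
    (U V : Matrix (Fin N) (Fin N) ℂ)
    (hU : U ∈ Matrix.unitaryGroup (Fin N) ℂ)
    (hV : V ∈ Matrix.unitaryGroup (Fin N) ℂ)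
    (x : Fin t → (Fin N → ℂ))
    (hind : LinearIndependent ℂ x)
    (hnonorth : ∀ j k, star (x j) ⬝ᵥ x k ≠ 0)
    (c : Fin t → ℂ) (hc : ∀ j, ‖c j‖ = 1)
    (htrain : ∀ j, V.mulVec (x j) = c j • U.mulVec (x j)) :
    (2 * t - N : ℝ) ≤ ‖(Uᴴ * V).trace‖ := by
  rcases Nat.eq_zero_or_pos t with rfl | ht
  · simpa using (neg_nonpos.2 (Nat.cast_nonneg N)).trans (norm_nonneg (Uᴴ * V).trace)
  let j₀ : Fin t := ⟨0, ht⟩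
  set T := toEuclideanCLM (n := Fin N) (𝕜 := ℂ) (Uᴴ * V)
  have hT : T ∈ unitary _ := Unitary.map_mem _ (mul_mem (Unitary.star_mem hU) hV)
  let y : Fin t → EuclideanSpace ℂ (Fin N) := fun j => WithLp.toLp 2 (x j)
  have hTy : ∀ j, T (y j) = c j • y j := fun j => by
    have hUU : Uᴴ * U = 1 := Matrix.mem_unitaryGroup_iff'.1 hU
    simp [T, y, htrain, Matrix.mulVec_mulVec, hUU]
  have hc₀ : ∀ j, c j = c j₀ := fun j =>
    T.eigenvalue_eq_of_inner_ne_zero hT (hTy j₀) (hTy j) <| by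
      rw [EuclideanSpace.inner_toLp_toLp, dotProduct_comm]
      exact hnonorth j₀ j
  have hspan : ∀ v ∈ span ℂ (Set.range y), T.toLinearMap v = c j₀ • v :=
    fun _ hv => LinearMap.eqOn_span' (f := T.toLinearMap) (g := c j₀ • LinearMap.id)
      (by rintro _ ⟨j, rfl⟩; simp [hTy, hc₀ j]) hv
  have hcontr : ∀ v, ‖T.toLinearMap v‖ ≤ ‖v‖ := fun v => (T.norm_map_of_mem_unitary hT v).le
  have hbound := LinearMap.two_mul_finrank_sub_finrank_le_norm_trace hcontr (hc j₀) _ hspan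
  have hy : LinearIndependent ℂ y :=
    hind.map' (WithLp.linearEquiv 2 ℂ (Fin N → ℂ)).symm.toLinearMap (LinearEquiv.ker _)
  rwa [finrank_span_eq_card hy, finrank_euclideanSpace_fin, Fintype.card_fin,
    coe_toEuclideanCLM_eq_toEuclideanLin, Matrix.trace_toEuclideanLin] at hbound

/-- Proposition 1 (upper bound of quantum risk, trace form). If `U, V` are
`N × N` unitaries, `N/2 ≤ t ≤ N`, the vectors `x 1, …, x t` are linearly
independent and pairwise nonorthogonal, and perfect training holds
(`V x_j = c_j • (U x_j)` with `|c_j| = 1`), then `|tr(U† V)| ≥ 2t − N`. -/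
theorem trace_lower_bound_of_perfect_training
    {N t : ℕ} (hNt : N ≤ 2 * t) (htN : t ≤ N)
    (U V : Matrix (Fin N) (Fin N) ℂ)
    (hU : U ∈ Matrix.unitaryGroup (Fin N) ℂ)
    (hV : V ∈ Matrix.unitaryGroup (Fin N) ℂ)
    (x : Fin t → (Fin N → ℂ))
    (hind : LinearIndependent ℂ x)
    (hnonorth : ∀ j k, star (x j) ⬝ᵥ x k ≠ 0)
    (c : Fin t → ℂ) (hc : ∀ j, ‖c j‖ = 1)
    (htrain : ∀ j, V.mulVec (x j) = c j • U.mulVec (x j)) :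
    (2 * t - N : ℝ) ≤ ‖(Uᴴ * V).trace‖ :=
  trace_lower_bound_of_perfect_training_general U V hU hV x hind hnonorth c hc htrain
end

section
/- Corollary. Let U and V be N×N complex unitary matrices, and let x_1, …, x_N ∈ ℂ^N be linearly independent vectors that are pairwise nonorthogonal, i.e. ⟨x_j, x_k⟩ ≠ 0 for all 1 ≤ j, k ≤ N. Suppose that for each j there is a complex scalar c_j with |c_j| = 1 such that V x_j = c_j · (U x_j). Then there exists a complex number c with |c| = 1 such that V = c·U. (Hence a dataset of N = 2^n nonorthogonal but linearly independent pure states suffices to learn an n-qubit unitary exactly, up to global phase.) -/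
/-!
Unitaries preserve inner products, so `V xⱼ = cⱼ U xⱼ` gives
`⟨xⱼ, xₖ⟩ = conj(cⱼ) cₖ ⟨xⱼ, xₖ⟩`. Nonorthogonality forces `conj(cⱼ) cₖ = 1` for all `j, k`;
with `j = k` this makes every `cⱼ` a phase, and then all the `cⱼ` coincide. Hence `V` and `c U`
agree on the basis `x`.
-/

open Matrix

theorem Matrix.star_mulVec_dotProduct_mulVec_of_mem_unitaryGroup {n α : Type*} [Fintype n]
    [DecidableEq n] [CommRing α] [StarRing α] {W : Matrix n n α}
    (hW : W ∈ unitaryGroup n α) (a b : n → α) :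
    star (W *ᵥ a) ⬝ᵥ (W *ᵥ b) = star a ⬝ᵥ b := by
  rw [star_mulVec, dotProduct_mulVec, vecMul_vecMul, ← star_eq_conjTranspose,
    Unitary.star_mul_self_of_mem hW, vecMul_one]

theorem Matrix.star_mul_mul_dotProduct_of_mulVec_eq_smul_mulVec {n ι α : Type*} [Fintype n]
    [DecidableEq n] [CommRing α] [StarRing α] {U V : Matrix n n α}
    (hU : U ∈ unitaryGroup n α) (hV : V ∈ unitaryGroup n α) {x : ι → n → α} {c : ι → α}
    (h : ∀ j, V *ᵥ x j = c j • U *ᵥ x j) (j k : ι) :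
    star (c j) * c k * (star (x j) ⬝ᵥ x k) = star (x j) ⬝ᵥ x k :=
  calc star (c j) * c k * (star (x j) ⬝ᵥ x k)
      = star (c j • U *ᵥ x j) ⬝ᵥ (c k • U *ᵥ x k) := by
        rw [star_smul, smul_dotProduct, dotProduct_smul,
          star_mulVec_dotProduct_mulVec_of_mem_unitaryGroup hU, smul_eq_mul, smul_eq_mul]
        ring
    _ = star (V *ᵥ x j) ⬝ᵥ (V *ᵥ x k) := by rw [h, h]
    _ = star (x j) ⬝ᵥ x k := star_mulVec_dotProduct_mulVec_of_mem_unitaryGroup hV _ _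

theorem eq_of_forall_star_mul_eq_one {R ι : Type*} [CommMonoid R] [StarMul R] {c : ι → R}
    (h : ∀ j k, star (c j) * c k = 1) (j k : ι) : c k = c j :=
  calc c k = star (c j) * c j * c k := by rw [h j j, one_mul]
    _ = c j * (star (c j) * c k) := by rw [mul_comm (star (c j)), mul_assoc]
    _ = c j := by rw [h j k, mul_one]

theorem Matrix.ext_of_mulVec_linearIndependent {K m n ι : Type*} [Field K] [Fintype n]
    [DecidableEq n] [Fintype ι] {A B : Matrix m n K} {x : ι → n → K}
    (hx : LinearIndependent K x) (hcard : Fintype.card ι = Fintype.card n)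
    (h : ∀ i, A *ᵥ x i = B *ᵥ x i) : A = B := by
  have hspan : Submodule.span K (Set.range x) = ⊤ :=
    hx.span_eq_top_of_card_eq_finrank' (by simpa using hcard)
  exact Matrix.toLin'.injective (LinearMap.ext_on_range hspan h)

theorem unitary_determined_by_nonorthogonal_basis_general
    {N : ℕ} (U V : Matrix (Fin N) (Fin N) ℂ)
    (hU : U ∈ Matrix.unitaryGroup (Fin N) ℂ)
    (hV : V ∈ Matrix.unitaryGroup (Fin N) ℂ)
    (x : Fin N → (Fin N → ℂ))
    (hind : LinearIndependent ℂ x)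
    (hnonorth : ∀ j k, star (x j) ⬝ᵥ x k ≠ 0)
    (c : Fin N → ℂ)
    (htrain : ∀ j, V.mulVec (x j) = c j • U.mulVec (x j)) :
    ∃ d : ℂ, ‖d‖ = 1 ∧ V = d • U := by
  have hphase : ∀ j k, star (c j) * c k = 1 := fun j k =>
    (mul_eq_right₀ (hnonorth j k)).1
      (star_mul_mul_dotProduct_of_mulVec_eq_smul_mulVec hU hV htrain j k)
  rcases isEmpty_or_nonempty (Fin N) with hN | ⟨⟨j₀⟩⟩
  · exact ⟨1, norm_one, Subsingleton.elim _ _⟩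
  refine ⟨c j₀, CStarRing.norm_of_mem_unitary (Unitary.mem_iff_star_mul_self.2 (hphase j₀ j₀)),
    ext_of_mulVec_linearIndependent hind rfl fun k => ?_⟩
  rw [htrain k, smul_mulVec, eq_of_forall_star_mul_eq_one hphase j₀ k]

/-- Corollary: a dataset of `N` linearly independent, pairwise nonorthogonal
pure states determines a unitary exactly up to a global phase. -/
theorem unitary_determined_by_nonorthogonal_basis
    {N : ℕ} (U V : Matrix (Fin N) (Fin N) ℂ)
    (hU : U ∈ Matrix.unitaryGroup (Fin N) ℂ)
    (hV : V ∈ Matrix.unitaryGroup (Fin N) ℂ)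
    (x : Fin N → (Fin N → ℂ))
    (hind : LinearIndependent ℂ x)
    (hnonorth : ∀ j k, star (x j) ⬝ᵥ x k ≠ 0)
    (c : Fin N → ℂ) (hc : ∀ j, ‖c j‖ = 1)
    (htrain : ∀ j, V.mulVec (x j) = c j • U.mulVec (x j)) :
    ∃ d : ℂ, ‖d‖ = 1 ∧ V = d • U :=
  unitary_determined_by_nonorthogonal_basis_general U V hU hV x hind hnonorth c htrain
end

section
/- Proposition (a dataset of n+1 elementary product states suffices). Fix n ≥ 1 and index 2^n × 2^n complex matrices by bit strings s ∈ {0,1}^n. Let ρ_0 be the matrix all of whose entries equal 2^{−n}, and for j = 1, …, n let ρ_j be the diagonal matrix whose (s, s) entry is 2^{−(n−1)} if the j-th bit of s is 0, and 0 otherwise. If U and V are 2^n × 2^n unitary matrices satisfying U ρ_i U† = V ρ_i V† for all i = 0, 1, …, n, then there exists a complex number c with |c| = 1 such that V = c·U. -/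
/-!
`W = V† U` is unitary and commutes with every training state. Commuting with the diagonal
states `ρ_j`, whose diagonals separate the bit strings, forces `W` to be diagonal; a diagonal
matrix commuting with the all-equal matrix `ρ₀` is scalar, and a unitary scalar has modulus one.
Then `V = U W†` is a unit-modulus multiple of `U`.
-/

open Matrix

theorem exists_ite_eq_zero_ne {κ R : Type*} [Zero R] {c : R} (hc : c ≠ 0) {s t : κ → Fin 2}
    (hst : s ≠ t) : ∃ j, (if s j = 0 then c else 0) ≠ (if t j = 0 then c else 0) := by
  obtain ⟨j, hj⟩ := Function.ne_iff.mp hst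
  refine ⟨j, ?_⟩
  generalize s j = a, t j = b at hj ⊢
  fin_cases a <;> fin_cases b <;> simp_all [eq_comm]

theorem commute_star_mul_of_conj_eq {R : Type*} [Monoid R] [StarMul R] {U V A : R}
    (hU : U ∈ unitary R) (hV : V ∈ unitary R) (h : U * A * star U = V * A * star V) :
    Commute (star V * U) A := by
  have hW : star V * U ∈ unitary R := mul_mem (Unitary.star_mem hV) hU
  rw [commute_unitary_iff_star_right_conjugate hW]
  calc star V * U * A * star (star V * U) = star V * (U * A * star U) * V := by
        simp only [star_mul, star_star, mul_assoc]
    _ = star V * V * A * (star V * V) := by rw [h]; simp only [mul_assoc]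
    _ = A := by rw [Unitary.star_mul_self_of_mem hV, one_mul, mul_one]

namespace Matrix

theorem of_ite_and_eq_diagonal {ι R : Type*} [DecidableEq ι] [Zero R] (p : ι → Prop)
    [DecidablePred p] (c : R) :
    of (fun s t => if s = t ∧ p s then c else 0) = diagonal (fun s => if p s then c else 0) := by
  ext s t
  by_cases hst : s = t
  · subst hst; simp
  · simp [hst]

variable {ι R : Type*} [Fintype ι] [DecidableEq ι]

theorem apply_eq_zero_of_commute_diagonal [CommRing R] [NoZeroDivisors R] {W : Matrix ι ι R}
    {d : ι → R} (h : Commute W (diagonal d)) {s t : ι} (hst : d s ≠ d t) : W s t = 0 := by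
  have hentry : W s t * d t = d s * W s t := by
    simpa using congrFun (congrFun h.eq s) t
  have : W s t * (d t - d s) = 0 := by linear_combination hentry
  exact (mul_eq_zero.mp this).resolve_right (sub_ne_zero.mpr hst.symm)

theorem isDiag_of_commute_diagonal [CommRing R] [NoZeroDivisors R] {κ : Type*}
    {W : Matrix ι ι R} {d : κ → ι → R} (hsep : Pairwise fun s t => ∃ k, d k s ≠ d k t)
    (h : ∀ k, Commute W (diagonal (d k))) : W.IsDiag := fun _ _ hst =>
  let ⟨k, hk⟩ := hsep hst
  apply_eq_zero_of_commute_diagonal (h k) hk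

theorem IsDiag.eq_smul_one_of_commute_const [Field R] {W : Matrix ι ι R} (hW : W.IsDiag) {c : R}
    (hc : c ≠ 0) (h : Commute W (of fun _ _ => c)) (i : ι) : W = W i i • 1 := by
  have hdiag : ∀ s t, W s s = W t t := by
    intro s t
    have hentry := congrFun (congrFun h.eq s) t
    simp only [mul_apply, of_apply] at hentry
    rwa [Finset.sum_eq_single s (fun k _ hk => by rw [hW hk.symm, zero_mul]) (by simp),
      Finset.sum_eq_single t (fun k _ hk => by rw [hW hk, mul_zero]) (by simp), mul_comm,
      mul_right_inj' hc] at hentry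
  ext s t
  by_cases hst : s = t
  · subst hst; simp [hdiag s i]
  · simp [hst, hW hst]

theorem mem_unitary_of_smul_one_mem_unitary [Nonempty ι] {𝕜 : Type*} [Field 𝕜] [StarRing 𝕜]
    {a : 𝕜} (h : a • (1 : Matrix ι ι 𝕜) ∈ unitary (Matrix ι ι 𝕜)) : a ∈ unitary 𝕜 := by
  have key : ∀ b c : 𝕜, (b • (1 : Matrix ι ι 𝕜)) * (c • 1) = 1 → b * c = 1 := by
    intro b c hbc
    rw [smul_mul_smul, one_mul] at hbc
    exact smul_left_injective 𝕜 one_ne_zero (hbc.trans (one_smul 𝕜 1).symm)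
  rw [Unitary.mem_iff, star_smul, star_one] at h
  exact ⟨key _ _ h.1, key _ _ h.2⟩

end Matrix

theorem unitary_determined_by_product_state_dataset_general
    {n : ℕ}
    (U V : Matrix (Fin n → Fin 2) (Fin n → Fin 2) ℂ)
    (hU : U ∈ Matrix.unitaryGroup (Fin n → Fin 2) ℂ)
    (hV : V ∈ Matrix.unitaryGroup (Fin n → Fin 2) ℂ)
    (ρ₀ : Matrix (Fin n → Fin 2) (Fin n → Fin 2) ℂ)
    (hρ₀ : ρ₀ = Matrix.of (fun _ _ => ((2 : ℂ) ^ n)⁻¹))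
    (ρ : Fin n → Matrix (Fin n → Fin 2) (Fin n → Fin 2) ℂ)
    (hρ : ∀ j, ρ j = Matrix.of
      (fun s t => if s = t ∧ s j = 0 then ((2 : ℂ) ^ (n - 1))⁻¹ else 0))
    (h0 : U * ρ₀ * Uᴴ = V * ρ₀ * Vᴴ)
    (hj : ∀ j, U * ρ j * Uᴴ = V * ρ j * Vᴴ) :
    ∃ c : ℂ, ‖c‖ = 1 ∧ V = c • U := by
  have hWj (j : Fin n) : Commute (star V * U)
      (diagonal fun s => if s j = 0 then ((2 : ℂ) ^ (n - 1))⁻¹ else 0) := by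
    rw [← of_ite_and_eq_diagonal, ← hρ j]
    exact commute_star_mul_of_conj_eq hU hV (hj j)
  have hdiag : (star V * U).IsDiag := isDiag_of_commute_diagonal
    (fun _ _ hst => exists_ite_eq_zero_ne (by simp) hst) hWj
  obtain ⟨a, hWa⟩ : ∃ a : ℂ, star V * U = a • 1 :=
    ⟨_, hdiag.eq_smul_one_of_commute_const (c := ((2 : ℂ) ^ n)⁻¹) (by simp)
      (hρ₀ ▸ commute_star_mul_of_conj_eq hU hV h0) 0⟩
  have ha : a ∈ unitary ℂ :=
    mem_unitary_of_smul_one_mem_unitary (hWa ▸ mul_mem (Unitary.star_mem hV) hU)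
  refine ⟨star a, CStarRing.norm_of_mem_unitary (Unitary.star_mem ha), ?_⟩
  calc V = U * star (star V * U) := by
        rw [star_mul, star_star, ← mul_assoc, Unitary.mul_star_self_of_mem hU, one_mul]
    _ = star a • U := by rw [hWa, star_smul, star_one, Matrix.mul_smul, mul_one]

/-- A dataset of `n + 1` elementary product states suffices: if `U, V` are
`2^n × 2^n` unitaries (indexed by bit strings) with `U ρ_i U† = V ρ_i V†` for
the `n + 1` training states `ρ₀ = (|+⟩⟨+|)^{⊗n}` (all entries `2^{−n}`) and
`ρ_j = τ^{⊗(j−1)} ⊗ |0⟩⟨0| ⊗ τ^{⊗(n−j)}` (diagonal with entry `2^{−(n−1)}`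
where the `j`-th bit is `0`), then `V = c • U` for a unit-modulus scalar. -/
theorem unitary_determined_by_product_state_dataset
    {n : ℕ} (hn : 1 ≤ n)
    (U V : Matrix (Fin n → Fin 2) (Fin n → Fin 2) ℂ)
    (hU : U ∈ Matrix.unitaryGroup (Fin n → Fin 2) ℂ)
    (hV : V ∈ Matrix.unitaryGroup (Fin n → Fin 2) ℂ)
    (ρ₀ : Matrix (Fin n → Fin 2) (Fin n → Fin 2) ℂ)
    (hρ₀ : ρ₀ = Matrix.of (fun _ _ => ((2 : ℂ) ^ n)⁻¹))
    (ρ : Fin n → Matrix (Fin n → Fin 2) (Fin n → Fin 2) ℂ)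
    (hρ : ∀ j, ρ j = Matrix.of
      (fun s t => if s = t ∧ s j = 0 then ((2 : ℂ) ^ (n - 1))⁻¹ else 0))
    (h0 : U * ρ₀ * Uᴴ = V * ρ₀ * Vᴴ)
    (hj : ∀ j, U * ρ j * Uᴴ = V * ρ j * Vᴴ) :
    ∃ c : ℂ, ‖c‖ = 1 ∧ V = c • U :=
  unitary_determined_by_product_state_dataset_general U V hU hV ρ₀ hρ₀ ρ hρ h0 hj
end

section
/- Lemma (one mixed state is not sufficient). Let N be an even positive integer and let ρ be any density matrix on ℂ^N, i.e., an N×N positive semidefinite complex matrix with trace 1. Then there exists an N×N unitary matrix W such that W ρ W† = ρ and tr(W) = 0. -/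
open Matrix
open scoped ComplexOrder

/-!
Diagonalize `ρ = U D U†` with `U` unitary and `D` diagonal. Any diagonal unitary `S` commutes
with `D`, so `W = U S U†` is a unitary commuting with `ρ`, and `tr W = tr S`. Taking
`S = diag(1, -1, 1, -1, …)`, whose trace vanishes in even dimension, gives the claim.
-/

namespace Matrix

section Unitary

variable {n R : Type*} [Fintype n] [DecidableEq n]

theorem diagonal_mem_unitaryGroup [CommRing R] [StarRing R] {d : n → R}
    (hd : ∀ i, d i ∈ unitary R) : diagonal d ∈ unitaryGroup n R := by
  rw [mem_unitaryGroup_iff, star_eq_conjTranspose, diagonal_conjTranspose,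
    diagonal_mul_diagonal, ← diagonal_one]
  exact congrArg diagonal (funext fun i => Unitary.mul_star_self_of_mem (hd i))

theorem trace_conjStarAlgAut {S : Type*} [CommSemiring R] [StarRing R] [CommSemiring S]
    [Algebra S R] (u : unitary (Matrix n n R)) (x : Matrix n n R) :
    trace (Unitary.conjStarAlgAut S _ u x) = trace x := by
  rw [Unitary.conjStarAlgAut_apply, trace_mul_cycle, Unitary.coe_star_mul_self, one_mul]

end Unitary

def alternatingSignDiagonal (N : ℕ) (R : Type*) [Ring R] : Matrix (Fin N) (Fin N) R :=
  diagonal fun i => (-1) ^ (i : ℕ)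

variable {N : ℕ} {R : Type*}

theorem alternatingSignDiagonal_mem_unitaryGroup [CommRing R] [StarRing R] :
    alternatingSignDiagonal N R ∈ unitaryGroup (Fin N) R :=
  diagonal_mem_unitaryGroup fun _ => pow_mem (by simp [Unitary.mem_iff]) _

theorem trace_alternatingSignDiagonal [Ring R] (hN : Even N) :
    trace (alternatingSignDiagonal N R) = 0 := by
  rw [alternatingSignDiagonal, trace_diagonal, Fin.sum_univ_eq_sum_range (fun i => (-1 : R) ^ i),
    neg_one_geom_sum, if_pos hN]

theorem IsHermitian.commute_conjStarAlgAut_eigenvectorUnitary_diagonal {n 𝕜 : Type*}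
    [Fintype n] [DecidableEq n] [RCLike 𝕜] {A : Matrix n n 𝕜} (hA : A.IsHermitian)
    (d : n → 𝕜) :
    Commute A (Unitary.conjStarAlgAut 𝕜 _ hA.eigenvectorUnitary (diagonal d)) := by
  conv_lhs => rw [hA.spectral_theorem]
  exact (commute_diagonal _ _).map _

end Matrix

theorem exists_traceless_unitary_fixing_density_matrix_general
    {N : ℕ} (hNeven : Even N)
    (ρ : Matrix (Fin N) (Fin N) ℂ)
    (hρ : ρ.PosSemidef) :
    ∃ W ∈ Matrix.unitaryGroup (Fin N) ℂ, W * ρ * Wᴴ = ρ ∧ W.trace = 0 := by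
  set W := Unitary.conjStarAlgAut ℂ _ hρ.isHermitian.eigenvectorUnitary
    (alternatingSignDiagonal N ℂ)
  have hW : W ∈ unitaryGroup (Fin N) ℂ :=
    Unitary.map_mem _ alternatingSignDiagonal_mem_unitaryGroup
  have hWρ : Commute W ρ :=
    (hρ.isHermitian.commute_conjStarAlgAut_eigenvectorUnitary_diagonal _).symm
  refine ⟨W, hW, (commute_unitary_iff_star_right_conjugate hW).mp hWρ, ?_⟩
  rw [trace_conjStarAlgAut, trace_alternatingSignDiagonal hNeven]

/-- One mixed state is not sufficient: for any even `N > 0` and any density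
matrix `ρ` on `ℂ^N` (positive semidefinite with trace `1`), there is a unitary
`W` with `W ρ W† = ρ` and `tr W = 0`. -/
theorem exists_traceless_unitary_fixing_density_matrix
    {N : ℕ} (hN : 0 < N) (hNeven : Even N)
    (ρ : Matrix (Fin N) (Fin N) ℂ)
    (hρ : ρ.PosSemidef) (hρtr : ρ.trace = 1) :
    ∃ W ∈ Matrix.unitaryGroup (Fin N) ℂ, W * ρ * Wᴴ = ρ ∧ W.trace = 0 :=
  exists_traceless_unitary_fixing_density_matrix_general hNeven ρ hρ
end

section
/- Proposition (two mixed states determine the unitary). Let ρ and σ be density matrices on ℂ^N that are full rank (positive definite) and have nondegenerate spectra (each has N pairwise distinct eigenvalues), and assume their eigenvectors are mutually nonorthogonal: for all nonzero v, w ∈ ℂ^N and reals λ, μ with ρ v = λ·v and σ w = μ·w, one has ⟨v, w⟩ ≠ 0. If W is an N×N unitary matrix satisfying W ρ W† = ρ and W σ W† = σ, then there exists a complex number c with |c| = 1 such that W = c·I. -/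
/-!
A unitary `W` fixing `ρ` commutes with it, so it preserves each eigenspace of `ρ`; these are
lines because the spectrum is simple, hence `W v_i = c_i v_i` on an eigenbasis `(v_i)` of `ρ`,
and likewise `W w_j = d_j w_j` on an eigenbasis `(w_j)` of `σ`. Since `W` preserves inner
products, `⟨v_i, w_j⟩ = conj c_i * d_j * ⟨v_i, w_j⟩` and `⟨v_i, v_i⟩ = |c_i|² ⟨v_i, v_i⟩`, so
nonorthogonality forces `c_i = d_j` for all `i, j`: `W` is a scalar on a basis.
-/

open Matrix
open scoped ComplexOrder

namespace Matrix

section Unitary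

variable {n R : Type*} [Fintype n] [DecidableEq n] [CommRing R] [StarRing R]
  {W : Matrix n n R}

lemma commute_of_mul_mul_conjTranspose_eq (hW : W ∈ unitaryGroup n R) {A : Matrix n n R}
    (h : W * A * Wᴴ = A) : Commute W A := by
  calc W * A = W * A * (Wᴴ * W) := by
        rw [← star_eq_conjTranspose, Unitary.star_mul_self_of_mem hW, Matrix.mul_one]
    _ = A * W := by rw [← Matrix.mul_assoc, h]

lemma star_mulVec_dotProduct_mulVec_of_mem_unitaryGroup_s10 (hW : W ∈ unitaryGroup n R)
    (x y : n → R) : star (W *ᵥ x) ⬝ᵥ (W *ᵥ y) = star x ⬝ᵥ y := by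
  rw [star_mulVec, ← dotProduct_mulVec, mulVec_mulVec, ← star_eq_conjTranspose,
    Unitary.star_mul_self_of_mem hW, one_mulVec]

end Unitary

section UnitaryEigenvalues

variable {n 𝕜 : Type*} [Fintype n] [DecidableEq n] [RCLike 𝕜] {W : Matrix n n 𝕜}
  {v w : n → 𝕜} {a b : 𝕜}

lemma star_mul_eq_one_of_mulVec_eq_smul (hW : W ∈ unitaryGroup n 𝕜) (hvw : star v ⬝ᵥ w ≠ 0)
    (hv : W *ᵥ v = a • v) (hw : W *ᵥ w = b • w) : star a * b = 1 := by
  have h := star_mulVec_dotProduct_mulVec_of_mem_unitaryGroup_s10 hW v w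
  rw [hv, hw, star_smul, smul_dotProduct, dotProduct_smul, smul_smul, smul_eq_mul] at h
  exact mul_right_cancel₀ hvw (h.trans (one_mul _).symm)

lemma norm_eq_one_of_mulVec_eq_smul (hW : W ∈ unitaryGroup n 𝕜) (hv0 : v ≠ 0)
    (hv : W *ᵥ v = a • v) : ‖a‖ = 1 := by
  have h := star_mul_eq_one_of_mulVec_eq_smul hW (dotProduct_star_self_eq_zero.not.2 hv0) hv hv
  rw [RCLike.star_def, RCLike.conj_mul] at h
  exact (pow_eq_one_iff_of_nonneg (norm_nonneg a) two_ne_zero).1 (by exact_mod_cast h)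

lemma eq_of_mulVec_eq_smul_of_dotProduct_ne_zero (hW : W ∈ unitaryGroup n 𝕜)
    (hvw : star v ⬝ᵥ w ≠ 0) (hv : W *ᵥ v = a • v) (hw : W *ᵥ w = b • w) : a = b := by
  have hv0 : star v ⬝ᵥ v ≠ 0 := by
    rintro h
    rw [dotProduct_star_self_eq_zero.1 h, star_zero, zero_dotProduct] at hvw
    exact hvw rfl
  have haa := star_mul_eq_one_of_mulVec_eq_smul hW hv0 hv hv
  have hab := star_mul_eq_one_of_mulVec_eq_smul hW hvw hv hw
  exact mul_left_cancel₀ (left_ne_zero_of_mul_eq_one haa) (haa.trans hab.symm)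

end UnitaryEigenvalues

namespace IsHermitian

variable {n 𝕜 : Type*} [Fintype n] [RCLike 𝕜] {A : Matrix n n 𝕜}

lemma dotProduct_eq_zero_of_mulVec_eq_smul (hA : A.IsHermitian) {v w : n → 𝕜} {l m : ℝ}
    (hv : A *ᵥ v = l • v) (hw : A *ᵥ w = m • w) (hlm : l ≠ m) : star v ⬝ᵥ w = 0 := by
  have hvA : star v ᵥ* A = l • star v := by
    simpa only [star_mulVec, hA.eq, star_smul, star_trivial] using congrArg star hv
  have h : (l : 𝕜) * (star v ⬝ᵥ w) = m * (star v ⬝ᵥ w) := by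
    rw [← RCLike.real_smul_eq_coe_mul, ← RCLike.real_smul_eq_coe_mul, ← smul_dotProduct, ← hvA,
      ← dotProduct_mulVec, hw, dotProduct_smul]
  exact (mul_eq_mul_right_iff.1 h).resolve_left (by exact_mod_cast hlm)

variable [DecidableEq n]

lemma eigenvectorBasis_ne_zero (hA : A.IsHermitian) (i : n) :
    (⇑(hA.eigenvectorBasis i) : n → 𝕜) ≠ 0 :=
  (WithLp.ofLp_eq_zero 2).ne.2 <| hA.eigenvectorBasis.orthonormal.ne_zero i

lemma mulVec_eigenvectorBasis' (hA : A.IsHermitian) (i : n) :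
    A *ᵥ ⇑(hA.eigenvectorBasis i) = (hA.eigenvalues i : 𝕜) • ⇑(hA.eigenvectorBasis i) := by
  rw [hA.mulVec_eigenvectorBasis, RCLike.real_smul_eq_coe_smul (K := 𝕜)]

lemma exists_eq_smul_eigenvectorBasis (hA : A.IsHermitian)
    (hinj : Function.Injective hA.eigenvalues) {u : n → 𝕜} {i : n}
    (hu : A *ᵥ u = hA.eigenvalues i • u) : ∃ c : 𝕜, u = c • ⇑(hA.eigenvectorBasis i) := by
  refine ⟨inner 𝕜 (hA.eigenvectorBasis i) (WithLp.toLp 2 u), ?_⟩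
  have horth : ∀ j ≠ i, inner 𝕜 (hA.eigenvectorBasis j) (WithLp.toLp 2 u) = 0 := fun j hj ↦ by
    rw [EuclideanSpace.inner_eq_star_dotProduct, dotProduct_comm]
    exact hA.dotProduct_eq_zero_of_mulVec_eq_smul (hA.mulVec_eigenvectorBasis j) hu
      (hinj.ne hj)
  have hrepr := hA.eigenvectorBasis.sum_repr' (WithLp.toLp 2 u)
  rw [Finset.sum_eq_single i (fun j _ hj ↦ by rw [horth j hj, zero_smul]) (by simp)] at hrepr
  exact congrArg WithLp.ofLp hrepr.symm

lemma exists_mulVec_eigenvectorBasis_eq_smul (hA : A.IsHermitian)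
    (hinj : Function.Injective hA.eigenvalues) {W : Matrix n n 𝕜} (hWA : Commute W A) (i : n) :
    ∃ c : 𝕜, W *ᵥ ⇑(hA.eigenvectorBasis i) = c • ⇑(hA.eigenvectorBasis i) :=
  hA.exists_eq_smul_eigenvectorBasis hinj <| by
    rw [mulVec_mulVec, ← hWA.eq, ← mulVec_mulVec, hA.mulVec_eigenvectorBasis, mulVec_smul]

end IsHermitian

lemma eq_smul_one_of_forall_mulVec_eq_smul {n ι 𝕜 : Type*} [Fintype n] [DecidableEq n]
    [RCLike 𝕜] (b : Module.Basis ι 𝕜 (EuclideanSpace 𝕜 n)) {W : Matrix n n 𝕜} {c : 𝕜}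
    (h : ∀ i, W *ᵥ ⇑(b i) = c • ⇑(b i)) : W = c • 1 := by
  apply (toLpLin 2 2).injective
  refine b.ext fun i ↦ ?_
  simp [toLpLin_apply, h]

end Matrix

theorem unitary_fixing_two_mixed_states_is_phase_general
    {N : ℕ} (ρ σ : Matrix (Fin N) (Fin N) ℂ)
    (hρ : ρ.PosDef) (hσ : σ.PosDef)
    (hρnondeg : Function.Injective hρ.1.eigenvalues)
    (hσnondeg : Function.Injective hσ.1.eigenvalues)
    (hnonorth : ∀ (v w : Fin N → ℂ) (lam mu : ℝ), v ≠ 0 → w ≠ 0 →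
      ρ.mulVec v = (lam : ℂ) • v → σ.mulVec w = (mu : ℂ) • w →
      star v ⬝ᵥ w ≠ 0)
    (W : Matrix (Fin N) (Fin N) ℂ)
    (hW : W ∈ Matrix.unitaryGroup (Fin N) ℂ)
    (hfixρ : W * ρ * Wᴴ = ρ) (hfixσ : W * σ * Wᴴ = σ) :
    ∃ c : ℂ, ‖c‖ = 1 ∧ W = c • (1 : Matrix (Fin N) (Fin N) ℂ) := by
  obtain _ | ⟨⟨j⟩⟩ := isEmpty_or_nonempty (Fin N)
  · exact ⟨1, norm_one, Subsingleton.elim _ _⟩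
  obtain ⟨d, hd⟩ := hσ.1.exists_mulVec_eigenvectorBasis_eq_smul hσnondeg
    (commute_of_mul_mul_conjTranspose_eq hW hfixσ) j
  refine ⟨d, norm_eq_one_of_mulVec_eq_smul hW (hσ.1.eigenvectorBasis_ne_zero j) hd,
    eq_smul_one_of_forall_mulVec_eq_smul hρ.1.eigenvectorBasis.toBasis fun i ↦ ?_⟩
  obtain ⟨c, hc⟩ := hρ.1.exists_mulVec_eigenvectorBasis_eq_smul hρnondeg
    (commute_of_mul_mul_conjTranspose_eq hW hfixρ) i
  have hoverlap := hnonorth _ _ _ _ (hρ.1.eigenvectorBasis_ne_zero i)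
    (hσ.1.eigenvectorBasis_ne_zero j) (hρ.1.mulVec_eigenvectorBasis' i)
    (hσ.1.mulVec_eigenvectorBasis' j)
  rw [OrthonormalBasis.coe_toBasis, hc,
    eq_of_mulVec_eq_smul_of_dotProduct_ne_zero hW hoverlap hc hd]

/-- Two mixed states determine the unitary: if `ρ` and `σ` are full-rank
density matrices on `ℂ^N` with nondegenerate spectra and mutually nonorthogonal
eigenvectors, then any unitary `W` satisfying `W ρ W† = ρ` and `W σ W† = σ`
must be a unit-modulus multiple of the identity. -/
theorem unitary_fixing_two_mixed_states_is_phase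
    {N : ℕ} (ρ σ : Matrix (Fin N) (Fin N) ℂ)
    (hρ : ρ.PosDef) (hσ : σ.PosDef)
    (hρtr : ρ.trace = 1) (hσtr : σ.trace = 1)
    (hρnondeg : Function.Injective hρ.1.eigenvalues)
    (hσnondeg : Function.Injective hσ.1.eigenvalues)
    (hnonorth : ∀ (v w : Fin N → ℂ) (lam mu : ℝ), v ≠ 0 → w ≠ 0 →
      ρ.mulVec v = (lam : ℂ) • v → σ.mulVec w = (mu : ℂ) • w →
      star v ⬝ᵥ w ≠ 0)
    (W : Matrix (Fin N) (Fin N) ℂ)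
    (hW : W ∈ Matrix.unitaryGroup (Fin N) ℂ)
    (hfixρ : W * ρ * Wᴴ = ρ) (hfixσ : W * σ * Wᴴ = σ) :
    ∃ c : ℂ, ‖c‖ = 1 ∧ W = c • (1 : Matrix (Fin N) (Fin N) ℂ) :=
  unitary_fixing_two_mixed_states_is_phase_general ρ σ hρ hσ hρnondeg hσnondeg hnonorth W hW hfixρ
    hfixσ
end
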